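/- Let n ≥ 4 be even and let I ⊆ {1,…,n} be nonempty. The I-canonical elements for the integer lattice 𝔍_Spin of Spin(2n) are precisely the following elements, where j ranges over the odd elements of I_0 and s ranges over I ∩ {n−1,n}: (a) if Σ_{i∈I_0} i is even, the elements ξ_I + ε^1_I H_s + ε^2_I H_j and ξ_I + ε^1_I H_s + ε^2_I (H_{n−1}+H_n); (b) if Σ_{i∈I_0} i is odd, the elements ξ_I + ε^0_I H_j + ε^1_I (H_s + H_j). -/
import Mathlib


/-- The duals of the simple roots of `so(2n)` (1-based index):
`H_i = E_1+⋯+E_i` for `i ≤ n-2`, `H_{n-1} = (E_1+⋯+E_{n-1}-E_n)/2`,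
`H_n = (E_1+⋯+E_{n-1}+E_n)/2`. -/
noncomputable def Hso (n i : ℕ) : Fin n → ℝ :=
  if i = n - 1 then (fun j => if (j : ℕ) + 2 ≤ n then 1 / 2 else -(1 / 2))
  else if i = n then (fun _ => 1 / 2)
  else fun j => if (j : ℕ) + 1 ≤ i then 1 else 0

/-- `ε^i_I = 1` if `|I ∩ {n-1, n}| = i`, and `0` otherwise. -/
def epsI (n : ℕ) (I : Finset ℕ) (i : ℕ) : ℕ :=
  if (I ∩ {n - 1, n}).card = i then 1 else 0

/-- The integer lattice of `Spin(2n)`: integer vectors with even coordinate sum. -/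
def JSpin (n : ℕ) : Set (Fin n → ℝ) :=
  {v | ∃ a : Fin n → ℤ, (∀ j, v j = a j) ∧ Even (∑ j, a j)}

/-- The set of `I`-canonical elements for a lattice `𝔏 ⊆ ℝ^n`. -/
def ICanonSet (n : ℕ) (𝔏 : Set (Fin n → ℝ)) (H : ℕ → Fin n → ℝ) (I : Finset ℕ) :
    Set (Fin n → ℝ) :=
  {ξ | ∃ c : ℕ → ℕ, (∀ i ∈ I, 1 ≤ c i) ∧ ξ = ∑ i ∈ I, c i • H i ∧ ξ ∈ 𝔏 ∧
    ∀ c' : ℕ → ℕ, (∀ i ∈ I, 1 ≤ c' i ∧ c' i ≤ c i) →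
      (∑ i ∈ I, c' i • H i) ∈ 𝔏 → (∑ i ∈ I, c' i • H i) = ξ}




/-- `Vd n d = ∑_{i=1}^n d i • H_i`. -/
noncomputable def Vd (n : ℕ) (d : ℕ → ℕ) : Fin n → ℝ :=
  ∑ i ∈ Finset.Icc 1 n, d i • Hso n i

lemma Icc_split (n : ℕ) (hn : 4 ≤ n) :
    Finset.Icc 1 n = insert (n-1) (insert n (Finset.Icc 1 (n-2))) := by
  ext x
  simp only [Finset.mem_Icc, Finset.mem_insert]
  omega

lemma Vd_coord (n : ℕ) (hn : 4 ≤ n) (d : ℕ → ℕ) (j : Fin n) :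
    Vd n d j =
      if (j : ℕ) + 2 ≤ n then
        ((∑ i ∈ Finset.Icc ((j : ℕ)+1) (n-2), d i : ℕ) : ℝ) + ((d (n-1) : ℝ) + d n)/2
      else ((d n : ℝ) - d (n-1))/2 := by
  have h1 : (n:ℕ)-1 ∉ insert n (Finset.Icc 1 (n-2)) := by
    simp only [Finset.mem_insert, Finset.mem_Icc]; omega
  have h2 : n ∉ Finset.Icc 1 (n-2) := by simp only [Finset.mem_Icc]; omega
  have hV : Vd n d j = (d (n-1) : ℝ) * Hso n (n-1) j + (d n : ℝ) * Hso n n j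
      + ∑ i ∈ Finset.Icc 1 (n-2), (d i : ℝ) * Hso n i j := by
    rw [Vd, Icc_split n hn, Finset.sum_insert h1, Finset.sum_insert h2]
    simp [Finset.sum_apply]
    ring
  have hH1 : Hso n (n-1) j = if (j : ℕ) + 2 ≤ n then (1:ℝ)/2 else -(1/2) := by
    rw [Hso]; simp
  have hH2 : Hso n n j = (1:ℝ)/2 := by
    rw [Hso]
    have : n ≠ n - 1 := by omega
    simp [this]
  have hsum : ∑ i ∈ Finset.Icc 1 (n-2), (d i : ℝ) * Hso n i j
      = ((∑ i ∈ Finset.Icc ((j : ℕ)+1) (n-2), d i : ℕ) : ℝ) := by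
    have : ∀ i ∈ Finset.Icc 1 (n-2), (d i : ℝ) * Hso n i j
        = if (j : ℕ) + 1 ≤ i then (d i : ℝ) else 0 := by
      intro i hi
      simp only [Finset.mem_Icc] at hi
      have e1 : i ≠ n - 1 := by omega
      have e2 : i ≠ n := by omega
      rw [Hso]
      simp only [e1, e2, if_false]
      by_cases h : (j : ℕ) + 1 ≤ i <;> simp [h]
    rw [Finset.sum_congr rfl this, Finset.sum_ite, Finset.sum_const_zero, add_zero]
    push_cast
    congr 1
    ext x
    simp only [Finset.mem_filter, Finset.mem_Icc]
    omega
  rw [hV, hH1, hH2, hsum]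
  by_cases h : (j : ℕ) + 2 ≤ n
  · simp [h]; ring
  · have : Finset.Icc ((j : ℕ)+1) (n-2) = ∅ := by
      apply Finset.Icc_eq_empty; omega
    simp [h, this]; ring

def Sw (n : ℕ) (d : ℕ → ℕ) : ℕ := ∑ i ∈ Finset.Icc 1 (n-2), i * d i

lemma double_sum (n : ℕ) (hn : 4 ≤ n) (d : ℕ → ℕ) :
    ∑ j ∈ Finset.range (n-1), ∑ i ∈ Finset.Icc (j+1) (n-2), d i = Sw n d := by
  have h1 : ∀ j ∈ Finset.range (n-1), ∑ i ∈ Finset.Icc (j+1) (n-2), d i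
      = ∑ i ∈ Finset.Icc 1 (n-2), if j + 1 ≤ i then d i else 0 := by
    intro j _
    rw [Finset.sum_ite, Finset.sum_const_zero, add_zero]
    congr 1
    ext x; simp only [Finset.mem_filter, Finset.mem_Icc]; omega
  rw [Finset.sum_congr rfl h1, Finset.sum_comm]
  apply Finset.sum_congr rfl
  intro i hi
  simp only [Finset.mem_Icc] at hi
  rw [Finset.sum_ite, Finset.sum_const_zero, add_zero, Finset.sum_const]
  have : (Finset.range (n-1)).filter (fun j => j + 1 ≤ i) = Finset.range i := by
    ext x; simp only [Finset.mem_filter, Finset.mem_range]; omega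
  rw [this]
  simp [mul_comm]


def aF (n : ℕ) (d : ℕ → ℕ) (e : ℤ) : ℕ → ℤ := fun k =>
  if k + 2 ≤ n then (((∑ i ∈ Finset.Icc (k+1) (n-2), d i : ℕ)) : ℤ) + e else (d n : ℤ) - e

lemma aF_sum (n : ℕ) (hn : 4 ≤ n) (d : ℕ → ℕ) (e : ℤ) :
    ∑ j : Fin n, aF n d e (j : ℕ) = (Sw n d : ℤ) + ((n:ℤ)-2)*e + d n := by
  rw [Fin.sum_univ_eq_sum_range (aF n d e) n]
  have hn1 : n = (n-1) + 1 := by omega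
  rw [hn1, Finset.sum_range_succ, ← hn1]
  have h1 : ∀ j ∈ Finset.range (n-1), aF n d e j
      = (((∑ i ∈ Finset.Icc (j+1) (n-2), d i : ℕ)) : ℤ) + e := by
    intro j hj
    simp only [Finset.mem_range] at hj
    rw [aF, if_pos (by omega)]
  have h2 : aF n d e (n-1) = (d n : ℤ) - e := by
    rw [aF, if_neg (by omega)]
  rw [Finset.sum_congr rfl h1, h2, Finset.sum_add_distrib, Finset.sum_const]
  have h3 : ∑ j ∈ Finset.range (n-1), (((∑ i ∈ Finset.Icc (j+1) (n-2), d i : ℕ)) : ℤ)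
      = (Sw n d : ℤ) := by
    rw [← Nat.cast_sum]
    exact_mod_cast congrArg (Nat.cast (R := ℤ)) (double_sum n hn d)
  rw [h3]
  simp only [Finset.card_range, nsmul_eq_mul]
  have : ((n-1:ℕ):ℤ) = (n:ℤ)-1 := by omega
  rw [this]
  ring

lemma mem_JSpin_iff (n : ℕ) (hn : 4 ≤ n) (hne : Even n) (d : ℕ → ℕ) :
    Vd n d ∈ JSpin n ↔ Even (d (n-1) + d n) ∧ Even (Sw n d + d n) := by
  have hjn : n - 1 < n := by omega
  have hco : ((⟨n-1,hjn⟩ : Fin n) : ℕ) = n - 1 := rfl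
  have hni : ¬ (n - 1 + 2 ≤ n) := by omega
  constructor
  · rintro ⟨a, ha, hev⟩
    have hlast := ha ⟨n-1, hjn⟩
    rw [Vd_coord n hn d ⟨n-1, hjn⟩, hco, if_neg hni] at hlast
    have h2a : 2 * a ⟨n-1, hjn⟩ = (d n : ℤ) - d (n-1) := by
      have : (2 * (a ⟨n-1, hjn⟩ : ℤ) : ℝ) = (d n : ℝ) - d (n-1) := by
        push_cast
        rw [← hlast]; ring
      exact_mod_cast this
    have heven1 : Even (d (n-1) + d n) := by
      rw [Nat.even_iff]; omega
    refine ⟨heven1, ?_⟩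
    set e : ℤ := (d n : ℤ) - a ⟨n-1, hjn⟩ with he
    have h2e : 2 * e = (d (n-1) : ℤ) + d n := by omega
    have heR : (e : ℝ) = ((d (n-1) : ℝ) + d n)/2 := by
      have : ((2*e : ℤ) : ℝ) = (((d (n-1) : ℤ) + d n : ℤ) : ℝ) := by exact_mod_cast h2e
      push_cast at this
      linarith
    have haeq : ∀ j : Fin n, a j = aF n d e (j : ℕ) := by
      intro j
      have hc : ((a j : ℤ) : ℝ) = ((aF n d e (j : ℕ) : ℤ) : ℝ) := by
        rw [← ha j, Vd_coord n hn d j, aF]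
        by_cases h : (j : ℕ) + 2 ≤ n
        · rw [if_pos h, if_pos h]
          push_cast
          rw [heR]
        · rw [if_neg h, if_neg h]
          push_cast
          linarith
      exact_mod_cast hc
    rw [Finset.sum_congr rfl (fun j _ => haeq j), aF_sum n hn d e] at hev
    have hcast : ((n:ℤ) - 2) = 2 * ((n:ℤ)/2 - 1) := by
      obtain ⟨t, ht⟩ := hne; omega
    obtain ⟨v, hv⟩ := hev
    obtain ⟨u, hu⟩ : ∃ u : ℤ, ((n:ℤ)-2)*e = u + u := ⟨((n:ℤ)/2-1)*e, by rw [hcast]; ring⟩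
    rw [Nat.even_iff]
    rw [hu] at hv
    omega
  · rintro ⟨h1, h2⟩
    set e : ℕ := (d (n-1) + d n)/2 with he
    have h2e : 2 * e = d (n-1) + d n := by
      rw [Nat.even_iff] at h1; omega
    refine ⟨fun j => aF n d (e : ℤ) (j : ℕ), ?_, ?_⟩
    · intro j
      rw [Vd_coord n hn d j]
      simp only [aF]
      by_cases h : (j : ℕ) + 2 ≤ n
      · rw [if_pos h, if_pos h]
        push_cast
        have : (e : ℝ) = ((d (n-1) : ℝ) + d n)/2 := by
          have : ((2*e : ℕ) : ℝ) = ((d (n-1) + d n : ℕ) : ℝ) := by exact_mod_cast congrArg (Nat.cast (R := ℝ)) h2e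
          push_cast at this
          linarith
        rw [this]
      · rw [if_neg h, if_neg h]
        push_cast
        have : ((2*e : ℕ) : ℝ) = ((d (n-1) + d n : ℕ) : ℝ) := by exact_mod_cast congrArg (Nat.cast (R := ℝ)) h2e
        push_cast at this
        linarith
    · rw [aF_sum n hn d (e : ℤ)]
      have hcast : ((n:ℤ) - 2) = 2 * ((n:ℤ)/2 - 1) := by
        obtain ⟨t, ht⟩ := hne; omega
      obtain ⟨u, hu⟩ : ∃ u : ℤ, ((n:ℤ)-2)*(e:ℤ) = u + u := ⟨((n:ℤ)/2-1)*e, by rw [hcast]; ring⟩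
      rw [Nat.even_iff] at h2
      rw [Int.even_iff, hu]
      omega

lemma Vd_inj (n : ℕ) (hn : 4 ≤ n) (d d' : ℕ → ℕ) (h : Vd n d = Vd n d') :
    ∀ i, 1 ≤ i → i ≤ n → d i = d' i := by
  -- the two half-coordinates
  have hjn : n - 1 < n := by omega
  have hjm : n - 2 < n := by omega
  have hclast := congrFun h ⟨n-1, hjn⟩
  have hcm := congrFun h ⟨n-2, hjm⟩
  rw [Vd_coord n hn d ⟨n-1,hjn⟩, Vd_coord n hn d' ⟨n-1,hjn⟩] at hclast
  rw [Vd_coord n hn d ⟨n-2,hjm⟩, Vd_coord n hn d' ⟨n-2,hjm⟩] at hcm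
  have hco1 : ((⟨n-1,hjn⟩ : Fin n) : ℕ) = n - 1 := rfl
  have hco2 : ((⟨n-2,hjm⟩ : Fin n) : ℕ) = n - 2 := rfl
  rw [hco1, if_neg (by omega : ¬ (n-1+2 ≤ n)), if_neg (by omega : ¬ (n-1+2 ≤ n))] at hclast
  rw [hco2, if_pos (by omega : n-2+2 ≤ n), if_pos (by omega : n-2+2 ≤ n)] at hcm
  have hemp : Finset.Icc (n-2+1) (n-2) = (∅ : Finset ℕ) := by
    apply Finset.Icc_eq_empty; omega
  rw [hemp] at hcm
  simp only [Finset.sum_empty, Nat.cast_zero, zero_add] at hcm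
  have hdn : d n = d' n := by
    have : (d n : ℝ) = d' n := by linarith
    exact_mod_cast this
  have hdn1 : d (n-1) = d' (n-1) := by
    have : (d (n-1) : ℝ) = d' (n-1) := by linarith
    exact_mod_cast this
  intro i h1 h2
  by_cases hi : i ≤ n - 2
  · have hj1 : i - 1 < n := by omega
    have hj2 : i < n := by omega
    have hc1 := congrFun h ⟨i-1, hj1⟩
    have hc2 := congrFun h ⟨i, hj2⟩
    rw [Vd_coord n hn d ⟨i-1,hj1⟩, Vd_coord n hn d' ⟨i-1,hj1⟩] at hc1
    rw [Vd_coord n hn d ⟨i,hj2⟩, Vd_coord n hn d' ⟨i,hj2⟩] at hc2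
    have hco3 : ((⟨i-1,hj1⟩ : Fin n) : ℕ) = i - 1 := rfl
    have hco4 : ((⟨i,hj2⟩ : Fin n) : ℕ) = i := rfl
    rw [hco3, if_pos (by omega : i-1+2 ≤ n), if_pos (by omega : i-1+2 ≤ n)] at hc1
    rw [hco4, if_pos (by omega : i+2 ≤ n), if_pos (by omega : i+2 ≤ n)] at hc2
    have hins : Finset.Icc (i-1+1) (n-2) = insert i (Finset.Icc (i+1) (n-2)) := by
      ext x; simp only [Finset.mem_Icc, Finset.mem_insert]; omega
    have hnotmem : i ∉ Finset.Icc (i+1) (n-2) := by simp only [Finset.mem_Icc]; omega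
    rw [hins, Finset.sum_insert hnotmem, Finset.sum_insert hnotmem] at hc1
    have : (d i : ℝ) = d' i := by
      push_cast at hc1 hc2 ⊢
      linarith
    exact_mod_cast this
  · rcases (by omega : i = n - 1 ∨ i = n) with rfl | rfl
    · exact hdn1
    · exact hdn

/-- extend a coefficient function by zero outside `I` -/
def dI (I : Finset ℕ) (c : ℕ → ℕ) : ℕ → ℕ := fun i => if i ∈ I then c i else 0

lemma sum_eq_Vd (n : ℕ) (I : Finset ℕ) (hI : I ⊆ Finset.Icc 1 n) (c : ℕ → ℕ) :
    ∑ i ∈ I, c i • Hso n i = Vd n (dI I c) := by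
  rw [Vd, ← Finset.sum_subset hI (fun x _ hx => by simp [dI, hx])]
  exact Finset.sum_congr rfl (fun i hi => by simp [dI, hi])

lemma Sw_dI (n : ℕ) (I : Finset ℕ) (c : ℕ → ℕ) :
    Sw n (dI I c) = ∑ i ∈ I ∩ Finset.Icc 1 (n-2), i * c i := by
  rw [Sw]
  have : ∀ i ∈ Finset.Icc 1 (n-2), i * dI I c i = if i ∈ I then i * c i else 0 := by
    intro i _
    rw [dI]
    by_cases h : i ∈ I <;> simp [h]
  rw [Finset.sum_congr rfl this, Finset.sum_ite, Finset.sum_const_zero, add_zero]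
  rw [Finset.filter_mem_eq_inter, Finset.inter_comm]

/-- the coefficient-level lattice condition -/
def QI (n : ℕ) (I : Finset ℕ) (c : ℕ → ℕ) : Prop :=
  Even (dI I c (n-1) + dI I c n) ∧
  Even ((∑ i ∈ I ∩ Finset.Icc 1 (n-2), i * c i) + dI I c n)

lemma memJ (n : ℕ) (hn : 4 ≤ n) (hne : Even n) (I : Finset ℕ)
    (hI : I ⊆ Finset.Icc 1 n) (c : ℕ → ℕ) :
    (∑ i ∈ I, c i • Hso n i) ∈ JSpin n ↔ QI n I c := by
  rw [sum_eq_Vd n I hI c, mem_JSpin_iff n hn hne, QI, Sw_dI]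

lemma coeff_inj (n : ℕ) (hn : 4 ≤ n) (I : Finset ℕ) (hI : I ⊆ Finset.Icc 1 n)
    (c c' : ℕ → ℕ) (h : ∑ i ∈ I, c i • Hso n i = ∑ i ∈ I, c' i • Hso n i) :
    ∀ i ∈ I, c i = c' i := by
  rw [sum_eq_Vd n I hI c, sum_eq_Vd n I hI c'] at h
  intro i hi
  have := hI hi
  rw [Finset.mem_Icc] at this
  have h2 := Vd_inj n hn _ _ h i this.1 this.2
  rwa [dI, dI, if_pos hi, if_pos hi] at h2

lemma ICanon_iff (n : ℕ) (hn : 4 ≤ n) (hne : Even n) (I : Finset ℕ)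
    (hI : I ⊆ Finset.Icc 1 n) (ξ : Fin n → ℝ) :
    ξ ∈ ICanonSet n (JSpin n) (Hso n) I ↔
      ∃ c : ℕ → ℕ, (∀ i ∈ I, 1 ≤ c i) ∧ ξ = ∑ i ∈ I, c i • Hso n i ∧ QI n I c ∧
        ∀ c' : ℕ → ℕ, (∀ i ∈ I, 1 ≤ c' i ∧ c' i ≤ c i) → QI n I c' →
          ∀ i ∈ I, c' i = c i := by
  constructor
  · rintro ⟨c, hc1, hξ, hmem, hmin⟩
    refine ⟨c, hc1, hξ, (memJ n hn hne I hI c).mp (hξ ▸ hmem), ?_⟩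
    intro c' hb hQ'
    have := hmin c' hb ((memJ n hn hne I hI c').mpr hQ')
    rw [hξ] at this
    exact fun i hi => coeff_inj n hn I hI c' c this i hi
  · rintro ⟨c, hc1, hξ, hQ, hmin⟩
    refine ⟨c, hc1, hξ, hξ ▸ (memJ n hn hne I hI c).mpr hQ, ?_⟩
    intro c' hb hmem'
    have hQ' := (memJ n hn hne I hI c').mp hmem'
    have heq := hmin c' hb hQ'
    rw [hξ]
    exact Finset.sum_congr rfl (fun i hi => by rw [heq i hi])

/-- coefficient pattern: 2 on `T`, 1 elsewhere -/
def c2 (T : Finset ℕ) : ℕ → ℕ := fun i => if i ∈ T then 2 else 1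

lemma sum_c2 (n : ℕ) (I T : Finset ℕ) (hT : T ⊆ I) :
    ∑ i ∈ I, c2 T i • Hso n i = (∑ i ∈ I, Hso n i) + ∑ i ∈ T, Hso n i := by
  have : ∀ i ∈ I, c2 T i • Hso n i = Hso n i + (if i ∈ T then Hso n i else 0) := by
    intro i _
    rw [c2]
    by_cases h : i ∈ T <;> simp [h, two_smul]
  rw [Finset.sum_congr rfl this, Finset.sum_add_distrib, Finset.sum_ite, Finset.sum_const_zero,
    add_zero, Finset.filter_mem_eq_inter, Finset.inter_eq_right.mpr hT]

lemma A_c2 (I0 T : Finset ℕ) :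
    ∑ i ∈ I0, i * c2 T i = (∑ i ∈ I0, i) + ∑ i ∈ I0 ∩ T, i := by
  have : ∀ i ∈ I0, i * c2 T i = i + (if i ∈ T then i else 0) := by
    intro i _
    rw [c2]
    by_cases h : i ∈ T <;> simp [h] <;> ring
  rw [Finset.sum_congr rfl this, Finset.sum_add_distrib, Finset.sum_ite, Finset.sum_const_zero,
    add_zero, Finset.filter_mem_eq_inter]

lemma exists_oddj (I0 : Finset ℕ) (c : ℕ → ℕ)
    (h : ¬ Even ((∑ i ∈ I0, i * c i) + ∑ i ∈ I0, i)) :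
    ∃ j ∈ I0, Odd j ∧ Even (c j) := by
  by_contra hcon
  push_neg at hcon
  apply h
  have : ∀ i ∈ I0, Even (i * c i + i) := by
    intro i hi
    rcases Nat.even_or_odd i with he | ho
    · exact Even.add (he.mul_right _) he
    · have hodd : ¬ Even (c i) := hcon i hi ho
      rw [Nat.odd_iff] at ho
      have h1 : c i % 2 = 1 := Nat.not_even_iff.mp hodd
      rw [Nat.even_iff, Nat.add_mod, Nat.mul_mod, ho, h1]
  rw [← Finset.sum_add_distrib]
  exact Finset.even_sum _ this

/-- The `I`-canonical elements of `Spin(2n)`, `n ≥ 4` even.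
In each listed expression, a parameter (`j` over odd elements of `I_0`, `s` over
`I ∩ {n-1,n}`) is constrained to its range exactly when the `ε`-coefficient of the
corresponding `H`-term is nonzero. -/
theorem spin_even_canonical_n_even (n : ℕ) (hn : 4 ≤ n) (hneven : Even n)
    (I : Finset ℕ) (hI : I ⊆ Finset.Icc 1 n) (hne : I.Nonempty) :
    ICanonSet n (JSpin n) (Hso n) I =
      {ξ | (Even (∑ i ∈ I ∩ Finset.Icc 1 (n - 2), i) ∧
              ((∃ s j : ℕ, (epsI n I 1 ≠ 0 → s ∈ I ∩ ({n - 1, n} : Finset ℕ)) ∧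
                  (epsI n I 2 ≠ 0 → j ∈ I ∩ Finset.Icc 1 (n - 2) ∧ Odd j) ∧
                  ξ = (∑ i ∈ I, Hso n i) + epsI n I 1 • Hso n s + epsI n I 2 • Hso n j) ∨
               (∃ s : ℕ, (epsI n I 1 ≠ 0 → s ∈ I ∩ ({n - 1, n} : Finset ℕ)) ∧
                  ξ = (∑ i ∈ I, Hso n i) + epsI n I 1 • Hso n s +
                        epsI n I 2 • (Hso n (n - 1) + Hso n n)))) ∨
           (Odd (∑ i ∈ I ∩ Finset.Icc 1 (n - 2), i) ∧
              (∃ j s : ℕ,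
                 (epsI n I 0 ≠ 0 ∨ epsI n I 1 ≠ 0 → j ∈ I ∩ Finset.Icc 1 (n - 2) ∧ Odd j) ∧
                 (epsI n I 1 ≠ 0 → s ∈ I ∩ ({n - 1, n} : Finset ℕ)) ∧
                 ξ = (∑ i ∈ I, Hso n i) + epsI n I 0 • Hso n j +
                       epsI n I 1 • (Hso n s + Hso n j)))} := by
  ext ξ
  simp only [Set.mem_setOf_eq]
  rw [ICanon_iff n hn hneven I hI]
  have hQI : ∀ c : ℕ → ℕ, QI n I c ↔
      Even ((if n-1 ∈ I then c (n-1) else 0) + (if n ∈ I then c n else 0)) ∧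
      Even ((∑ i ∈ I ∩ Finset.Icc 1 (n-2), i * c i) + (if n ∈ I then c n else 0)) :=
    fun c => Iff.rfl
  have hIcc : ∀ j, j ∈ I ∩ Finset.Icc 1 (n-2) → j ∈ I ∧ 1 ≤ j ∧ j ≤ n-2 := by
    intro j hj
    simp only [Finset.mem_inter, Finset.mem_Icc] at hj
    exact ⟨hj.1, hj.2.1, hj.2.2⟩
  have hone : ∑ i ∈ I, (fun _ => 1 : ℕ → ℕ) i • Hso n i = ∑ i ∈ I, Hso n i := by
    simp
  have hsumone : ∀ c' : ℕ → ℕ, (∀ i ∈ I ∩ Finset.Icc 1 (n-2), c' i = 1) →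
      ∑ i ∈ I ∩ Finset.Icc 1 (n-2), i * c' i = ∑ i ∈ I ∩ Finset.Icc 1 (n-2), i := by
    intro c' h
    refine Finset.sum_congr rfl (fun i hi => ?_)
    rw [h i hi, mul_one]
  have hno_top : ∀ x ∈ I ∩ Finset.Icc 1 (n-2), x ≠ n-1 ∧ x ≠ n := by
    intro x hx
    have := hIcc x hx
    omega
  by_cases h1 : (n-1) ∈ I <;> by_cases h2 : n ∈ I
  · -- k = 2
    have hn1n : (n:ℕ)-1 ≠ n := by omega
    have hset : I ∩ ({n-1, n} : Finset ℕ) = {n-1, n} := by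
      ext x
      simp only [Finset.mem_inter, Finset.mem_insert, Finset.mem_singleton]
      constructor
      · rintro ⟨hx, h⟩
        exact h
      · rintro (rfl | rfl)
        · exact ⟨h1, Or.inl rfl⟩
        · exact ⟨h2, Or.inr rfl⟩
    have hcard : (I ∩ ({n-1, n} : Finset ℕ)).card = 2 := by
      rw [hset, Finset.card_insert_of_notMem (by simp [hn1n]), Finset.card_singleton]
    have e0 : epsI n I 0 = 0 := by simp [epsI, hcard]
    have e1 : epsI n I 1 = 0 := by simp [epsI, hcard]
    have e2 : epsI n I 2 = 1 := by simp [epsI, hcard]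
    have hintT : I ∩ Finset.Icc 1 (n-2) ∩ ({n-1, n} : Finset ℕ) = ∅ := by
      ext x
      simp only [Finset.mem_inter, Finset.mem_insert, Finset.mem_singleton,
        Finset.notMem_empty, iff_false]
      rintro ⟨hx, rfl | rfl⟩
      · exact ((hno_top _ (Finset.mem_inter.mpr hx)).1 rfl)
      · exact ((hno_top _ (Finset.mem_inter.mpr hx)).2 rfl)
    have hTsub : ({n-1, n} : Finset ℕ) ⊆ I := by
      intro x hx
      rcases Finset.mem_insert.mp hx with rfl | hx
      · exact h1
      · rw [Finset.mem_singleton] at hx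
        subst hx
        exact h2
    have hvn1 : c2 {n-1, n} (n-1) = 2 := by simp [c2]
    have hvn : c2 {n-1, n} n = 2 := by simp [c2]
    have hsumT : ∑ i ∈ ({n-1, n} : Finset ℕ), Hso n i = Hso n (n-1) + Hso n n := by
      rw [Finset.sum_insert (by simp [hn1n]), Finset.sum_singleton]
    simp only [e0, e1, e2, ne_eq, not_true_eq_false, not_false_eq_true, false_implies,
      true_implies, zero_smul, one_smul, add_zero, zero_add, false_or, or_false,
      one_ne_zero, true_or, OfNat.ofNat_ne_zero, exists_const, true_and, and_true,
      or_self, false_or]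
    constructor
    · rintro ⟨c, hc1, hξ, hQ, hmin⟩
      rw [hQI] at hQ
      simp only [if_pos h1, if_pos h2] at hQ
      rcases Nat.even_or_odd (∑ i ∈ I ∩ Finset.Icc 1 (n-2), i) with hBe | hBo
      · left
        refine ⟨hBe, ?_⟩
        rcases Nat.even_or_odd (c n) with hcne | hcno
        · -- both c (n-1), c n even : pattern {n-1, n}
          right
          have hcn1e : Even (c (n-1)) := by
            rcases hQ.1 with ⟨t, ht⟩
            rcases hcne with ⟨u, hu⟩
            exact ⟨t - u, by omega⟩
          have hc2n : 2 ≤ c n := by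
            rcases hcne with ⟨t, ht⟩
            have := hc1 n h2
            omega
          have hc2n1 : 2 ≤ c (n-1) := by
            rcases hcn1e with ⟨t, ht⟩
            have := hc1 (n-1) h1
            omega
          have hbounds : ∀ i ∈ I, 1 ≤ c2 {n-1, n} i ∧ c2 {n-1, n} i ≤ c i := by
            intro i hi
            rw [c2]
            by_cases hin : i ∈ ({n-1, n} : Finset ℕ)
            · rcases Finset.mem_insert.mp hin with rfl | hin'
              · simp [hin, hc2n1]
              · rw [Finset.mem_singleton] at hin'
                subst hin'
                simp [hin, hc2n]
            · simp [hin, hc1 i hi]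
          have hQ2 : QI n I (c2 {n-1, n}) := by
            rw [hQI]
            simp only [if_pos h1, if_pos h2, hvn1, hvn]
            refine ⟨⟨2, by omega⟩, ?_⟩
            rw [A_c2, hintT, Finset.sum_empty, add_zero]
            rcases hBe with ⟨t, ht⟩
            exact ⟨t+1, by omega⟩
          have heq := hmin (c2 {n-1, n}) hbounds hQ2
          have hcg : ∑ i ∈ I, c i • Hso n i = ∑ i ∈ I, c2 {n-1, n} i • Hso n i :=
            Finset.sum_congr rfl (fun i hi => by rw [← heq i hi])
          rw [hξ, hcg, sum_c2 n I {n-1, n} hTsub, hsumT]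
        · -- both odd : pattern {j}
          left
          have hA : ¬ Even (∑ i ∈ I ∩ Finset.Icc 1 (n-2), i * c i) := by
            intro h
            rcases hQ.2 with ⟨t, ht⟩
            rcases h with ⟨u, hu⟩
            rw [Nat.odd_iff] at hcno
            omega
          have hno : ¬ Even ((∑ i ∈ I ∩ Finset.Icc 1 (n-2), i * c i) +
              ∑ i ∈ I ∩ Finset.Icc 1 (n-2), i) := by
            intro h
            rcases h with ⟨t, ht⟩
            rcases hBe with ⟨u, hu⟩
            exact hA ⟨t - u, by omega⟩
          obtain ⟨j, hj, hjodd, hjeven⟩ := exists_oddj _ c hno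
          have hjI : j ∈ I := (hIcc j hj).1
          have hcj2 : 2 ≤ c j := by
            rcases hjeven with ⟨t, ht⟩
            have := hc1 j hjI
            omega
          have hjn1 : ¬ ((n:ℕ)-1 = j) := fun h => (hno_top j hj).1 h.symm
          have hjn : ¬ (n = j) := fun h => (hno_top j hj).2 h.symm
          have hbounds : ∀ i ∈ I, 1 ≤ c2 {j} i ∧ c2 {j} i ≤ c i := by
            intro i hi
            rw [c2]
            by_cases hin : i ∈ ({j} : Finset ℕ)
            · rw [Finset.mem_singleton] at hin
              subst hin
              simp [hcj2]
            · simp [hin, hc1 i hi]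
          have hQ2 : QI n I (c2 {j}) := by
            rw [hQI]
            have hv1 : c2 {j} (n-1) = 1 := by
              simp only [c2, Finset.mem_singleton]
              rw [if_neg hjn1]
            have hv2 : c2 {j} n = 1 := by
              simp only [c2, Finset.mem_singleton]
              rw [if_neg hjn]
            simp only [if_pos h1, if_pos h2, hv1, hv2]
            refine ⟨⟨1, by omega⟩, ?_⟩
            rw [A_c2, Finset.inter_singleton_of_mem hj, Finset.sum_singleton]
            have h3 : Even (∑ i ∈ I ∩ Finset.Icc 1 (n-2), i + j + 1) := by
              rcases hBe with ⟨t, ht⟩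
              rcases hjodd with ⟨u, hu⟩
              exact ⟨t + u + 1, by omega⟩
            exact h3
          have heq := hmin (c2 {j}) hbounds hQ2
          have hcg : ∑ i ∈ I, c i • Hso n i = ∑ i ∈ I, c2 {j} i • Hso n i :=
            Finset.sum_congr rfl (fun i hi => by rw [← heq i hi])
          exact ⟨j, ⟨hj, hjodd⟩, by
            rw [hξ, hcg, sum_c2 n I {j} (Finset.singleton_subset_iff.mpr hjI),
              Finset.sum_singleton]⟩
      · right
        refine ⟨hBo, ?_⟩
        have hQone : QI n I (fun _ => 1) := by
          rw [hQI]
          simp only [if_pos h1, if_pos h2]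
          refine ⟨⟨1, by omega⟩, ?_⟩
          rw [hsumone (fun _ => 1) (fun i _ => rfl)]
          rcases hBo with ⟨t, ht⟩
          exact ⟨t+1, by omega⟩
        have heq := hmin (fun _ => 1) (fun i hi => ⟨le_refl 1, hc1 i hi⟩) hQone
        have hcg : ∑ i ∈ I, c i • Hso n i = ∑ i ∈ I, (fun _ => 1 : ℕ → ℕ) i • Hso n i :=
          Finset.sum_congr rfl (fun i hi => by rw [← heq i hi])
        rw [hξ, hcg, hone]
    · rintro (⟨hBe, ⟨j, ⟨hj, hjodd⟩, hξ⟩ | hξ⟩ | ⟨hBo, hξ⟩)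
      · -- pattern {j}
        have hjI : j ∈ I := (hIcc j hj).1
        have hjn1 : ¬ ((n:ℕ)-1 = j) := fun h => (hno_top j hj).1 h.symm
        have hjn : ¬ (n = j) := fun h => (hno_top j hj).2 h.symm
        have hv1 : c2 {j} (n-1) = 1 := by
          simp only [c2, Finset.mem_singleton]
          rw [if_neg hjn1]
        have hv2 : c2 {j} n = 1 := by
          simp only [c2, Finset.mem_singleton]
          rw [if_neg hjn]
        refine ⟨c2 {j}, ?_, ?_, ?_, ?_⟩
        · intro i _
          rw [c2]
          split <;> omega
        · rw [hξ, sum_c2 n I {j} (Finset.singleton_subset_iff.mpr hjI), Finset.sum_singleton]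
        · rw [hQI]
          simp only [if_pos h1, if_pos h2, hv1, hv2]
          refine ⟨⟨1, by omega⟩, ?_⟩
          rw [A_c2, Finset.inter_singleton_of_mem hj, Finset.sum_singleton]
          rcases hBe with ⟨t, ht⟩
          rcases hjodd with ⟨u, hu⟩
          exact ⟨t + u + 1, by omega⟩
        · intro c' hb hQ'
          rw [hQI] at hQ'
          simp only [if_pos h1, if_pos h2] at hQ'
          have hbn1 := hb (n-1) h1
          have hbn := hb n h2
          rw [hv1] at hbn1
          rw [hv2] at hbn
          have hcn1 : c' (n-1) = 1 := by omega
          have hcn : c' n = 1 := by omega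
          have hcj : c' j = 2 := by
            by_contra hne2
            have hb2 := hb j hjI
            have hv : c2 {j} j = 2 := by simp [c2]
            rw [hv] at hb2
            have hcj1 : c' j = 1 := by omega
            have hall : ∀ i ∈ I ∩ Finset.Icc 1 (n-2), c' i = 1 := by
              intro i hi
              by_cases hij : i = j
              · rw [hij, hcj1]
              · have hbi := hb i (hIcc i hi).1
                have : c2 {j} i = 1 := by
                  simp only [c2, Finset.mem_singleton]
                  rw [if_neg hij]
                rw [this] at hbi
                omega
            rw [hsumone c' hall, hcn] at hQ'
            rcases hQ'.2 with ⟨t, ht⟩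
            rcases hBe with ⟨u, hu⟩
            omega
          intro i hi
          by_cases hij : i = j
          · subst hij
            simp [c2, hcj]
          · have := hb i hi
            simp only [c2, Finset.mem_singleton, if_neg hij] at this ⊢
            omega
      · -- pattern {n-1, n}
        refine ⟨c2 {n-1, n}, ?_, ?_, ?_, ?_⟩
        · intro i _
          rw [c2]
          split <;> omega
        · rw [hξ, sum_c2 n I {n-1, n} hTsub, hsumT]
        · rw [hQI]
          simp only [if_pos h1, if_pos h2, hvn1, hvn]
          refine ⟨⟨2, by omega⟩, ?_⟩
          rw [A_c2, hintT, Finset.sum_empty, add_zero]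
          rcases hBe with ⟨t, ht⟩
          exact ⟨t+1, by omega⟩
        · intro c' hb hQ'
          rw [hQI] at hQ'
          simp only [if_pos h1, if_pos h2] at hQ'
          have hall : ∀ i ∈ I ∩ Finset.Icc 1 (n-2), c' i = 1 := by
            intro i hi
            have hbi := hb i (hIcc i hi).1
            have : c2 {n-1, n} i = 1 := by
              simp only [c2, Finset.mem_insert, Finset.mem_singleton]
              rw [if_neg]
              push_neg
              exact ⟨(hno_top i hi).1, (hno_top i hi).2⟩
            rw [this] at hbi
            omega
          have hA' : ∑ i ∈ I ∩ Finset.Icc 1 (n-2), i * c' i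
              = ∑ i ∈ I ∩ Finset.Icc 1 (n-2), i := hsumone c' hall
          have hbn1 := hb (n-1) h1
          have hbn := hb n h2
          rw [hvn1] at hbn1
          rw [hvn] at hbn
          have hcn : c' n = 2 := by
            rcases hQ'.2 with ⟨t, ht⟩
            rcases hBe with ⟨u, hu⟩
            rw [hA'] at ht
            omega
          have hcn1 : c' (n-1) = 2 := by
            rcases hQ'.1 with ⟨t, ht⟩
            omega
          intro i hi
          by_cases hin1 : i = n-1
          · subst hin1
            rw [hvn1, hcn1]
          · by_cases hin : i = n
            · subst hin
              rw [hvn, hcn]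
            · have := hb i hi
              have hv : c2 {n-1, n} i = 1 := by
                simp only [c2, Finset.mem_insert, Finset.mem_singleton]
                rw [if_neg]
                push_neg
                exact ⟨hin1, hin⟩
              rw [hv] at this ⊢
              omega
      · -- pattern all ones
        refine ⟨fun _ => 1, fun i _ => le_refl 1, by rw [hξ, hone], ?_, ?_⟩
        · rw [hQI]
          simp only [if_pos h1, if_pos h2]
          refine ⟨⟨1, by omega⟩, ?_⟩
          rw [hsumone (fun _ => 1) (fun i _ => rfl)]
          rcases hBo with ⟨t, ht⟩
          exact ⟨t+1, by omega⟩
        · intro c' hb _ i hi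
          have hthis : 1 ≤ c' i ∧ c' i ≤ 1 := hb i hi
          show c' i = 1
          omega
  · -- k = 1, s = n-1
    have hset : I ∩ ({n-1, n} : Finset ℕ) = {n-1} := by
      ext x
      simp only [Finset.mem_inter, Finset.mem_insert, Finset.mem_singleton]
      constructor
      · rintro ⟨hx, rfl | rfl⟩
        · rfl
        · exact absurd hx h2
      · rintro rfl
        exact ⟨h1, Or.inl rfl⟩
    have e0 : epsI n I 0 = 0 := by simp [epsI, hset]
    have e1 : epsI n I 1 = 1 := by simp [epsI, hset]
    have e2 : epsI n I 2 = 0 := by simp [epsI, hset]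
    have hne1 : (n:ℕ)-1 ∉ Finset.Icc 1 (n-2) := by simp [Finset.mem_Icc]; omega
    have hIint : ∀ T : Finset ℕ, I ∩ Finset.Icc 1 (n-2) ∩ (insert (n-1) T)
        = I ∩ Finset.Icc 1 (n-2) ∩ T := by
      intro T
      ext x
      simp only [Finset.mem_inter, Finset.mem_insert]
      constructor
      · rintro ⟨hx, rfl | hxT⟩
        · exact absurd hx.2 hne1
        · exact ⟨hx, hxT⟩
      · rintro ⟨hx, hxT⟩
        exact ⟨hx, Or.inr hxT⟩
    simp only [e0, e1, e2, ne_eq, not_true_eq_false, not_false_eq_true, false_implies,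
      true_implies, zero_smul, one_smul, add_zero, zero_add, false_or, or_false,
      one_ne_zero, true_or, OfNat.ofNat_ne_zero, exists_const, true_and, and_true,
      or_self, hset, Finset.mem_singleton]
    constructor
    · rintro ⟨c, hc1, hξ, hQ, hmin⟩
      rw [hQI] at hQ
      simp only [if_pos h1, if_neg h2, add_zero] at hQ
      have hc2n1 : 2 ≤ c (n-1) := by
        rcases hQ.1 with ⟨t, ht⟩
        have := hc1 (n-1) h1
        omega
      rcases Nat.even_or_odd (∑ i ∈ I ∩ Finset.Icc 1 (n-2), i) with hBe | hBo
      · left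
        refine ⟨hBe, n-1, rfl, ?_⟩
        have hbounds : ∀ i ∈ I, 1 ≤ c2 {n-1} i ∧ c2 {n-1} i ≤ c i := by
          intro i hi
          rw [c2]
          by_cases hin : i ∈ ({n-1} : Finset ℕ)
          · rw [Finset.mem_singleton] at hin
            subst hin
            simp [hc2n1]
          · simp [hin, hc1 i hi]
        have hQ2 : QI n I (c2 {n-1}) := by
          rw [hQI]
          simp only [if_pos h1, if_neg h2, add_zero]
          constructor
          · simp [c2]
          · rw [A_c2]
            have : I ∩ Finset.Icc 1 (n-2) ∩ {n-1} = ∅ := by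
              have := hIint ∅
              simpa using this
            rw [this]
            simpa [c2] using hBe
        have heq := hmin (c2 {n-1}) hbounds hQ2
        have hcg : ∑ i ∈ I, c i • Hso n i = ∑ i ∈ I, c2 {n-1} i • Hso n i :=
          Finset.sum_congr rfl (fun i hi => by rw [← heq i hi])
        rw [hξ, hcg, sum_c2 n I {n-1} (Finset.singleton_subset_iff.mpr h1),
          Finset.sum_singleton]
      · right
        refine ⟨hBo, ?_⟩
        have hA : Even (∑ i ∈ I ∩ Finset.Icc 1 (n-2), i * c i) := hQ.2
        have hno : ¬ Even ((∑ i ∈ I ∩ Finset.Icc 1 (n-2), i * c i) +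
            ∑ i ∈ I ∩ Finset.Icc 1 (n-2), i) := by
          intro h
          exact (Nat.not_odd_iff_even.mpr ((Nat.even_add.mp h).mp hA)) hBo
        obtain ⟨j, hj, hjodd, hjeven⟩ := exists_oddj _ c hno
        have hjI : j ∈ I := (hIcc j hj).1
        have hjn : j ≠ n-1 := (hno_top j hj).1
        have hcj2 : 2 ≤ c j := by
          rcases hjeven with ⟨t, ht⟩
          have := hc1 j hjI
          omega
        have hTsub : ({j, n-1} : Finset ℕ) ⊆ I := by
          intro x hx
          rcases Finset.mem_insert.mp hx with rfl | hx
          · exact hjI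
          · rw [Finset.mem_singleton] at hx
            subst hx
            exact h1
        have hbounds : ∀ i ∈ I, 1 ≤ c2 {j, n-1} i ∧ c2 {j, n-1} i ≤ c i := by
          intro i hi
          rw [c2]
          by_cases hin : i ∈ ({j, n-1} : Finset ℕ)
          · rcases Finset.mem_insert.mp hin with rfl | hin'
            · simp [hin, hcj2]
            · rw [Finset.mem_singleton] at hin'
              subst hin'
              simp [hin, hc2n1]
          · simp [hin, hc1 i hi]
        have hQ2 : QI n I (c2 {j, n-1}) := by
          rw [hQI]
          simp only [if_pos h1, if_neg h2, add_zero]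
          constructor
          · simp [c2]
          · rw [A_c2]
            have hint : I ∩ Finset.Icc 1 (n-2) ∩ ({j, n-1} : Finset ℕ) = {j} := by
              ext x
              simp only [Finset.mem_inter, Finset.mem_insert, Finset.mem_singleton]
              constructor
              · rintro ⟨hx, rfl | rfl⟩
                · rfl
                · exact absurd hx.2 hne1
              · rintro rfl
                exact ⟨Finset.mem_inter.mp hj, Or.inl rfl⟩
            rw [hint, Finset.sum_singleton]
            exact hBo.add_odd hjodd
        have heq := hmin (c2 {j, n-1}) hbounds hQ2
        refine ⟨j, n-1, ⟨hj, hjodd⟩, rfl, ?_⟩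
        have hcg : ∑ i ∈ I, c i • Hso n i = ∑ i ∈ I, c2 {j, n-1} i • Hso n i :=
          Finset.sum_congr rfl (fun i hi => by rw [← heq i hi])
        have hjs : j ∉ ({n-1} : Finset ℕ) := by simp [hjn]
        rw [hξ, hcg, sum_c2 n I {j, n-1} hTsub, Finset.sum_insert hjs, Finset.sum_singleton]
        abel
    · rintro (⟨hBe, s, rfl, hξ⟩ | ⟨hBo, j, s, ⟨hj, hjodd⟩, rfl, hξ⟩)
      · refine ⟨c2 {n-1}, ?_, ?_, ?_, ?_⟩
        · intro i _
          rw [c2]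
          split <;> omega
        · rw [hξ, sum_c2 n I {n-1} (Finset.singleton_subset_iff.mpr h1), Finset.sum_singleton]
        · rw [hQI]
          simp only [if_pos h1, if_neg h2, add_zero]
          constructor
          · simp [c2]
          · rw [A_c2]
            have : I ∩ Finset.Icc 1 (n-2) ∩ {n-1} = ∅ := by
              ext x
              simp only [Finset.mem_inter, Finset.mem_singleton, Finset.notMem_empty,
                iff_false]
              rintro ⟨hx, rfl⟩
              exact hne1 hx.2
            rw [this]
            simpa [c2] using hBe
        · intro c' hb hQ'
          rw [hQI] at hQ'
          simp only [if_pos h1, if_neg h2, add_zero] at hQ'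
          have hcn1 : c' (n-1) = 2 := by
            have hb1 := hb (n-1) h1
            simp [c2] at hb1
            rcases hQ'.1 with ⟨t, ht⟩
            omega
          intro i hi
          by_cases hin : i = n-1
          · subst hin
            simp [c2, hcn1]
          · have := hb i hi
            simp only [c2, Finset.mem_singleton, if_neg hin] at this ⊢
            omega
      · have hjI : j ∈ I := (hIcc j hj).1
        have hjn : j ≠ n-1 := (hno_top j hj).1
        have hTsub : ({j, n-1} : Finset ℕ) ⊆ I := by
          intro x hx
          rcases Finset.mem_insert.mp hx with rfl | hx
          · exact hjI
          · rw [Finset.mem_singleton] at hx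
            subst hx
            exact h1
        have hint : I ∩ Finset.Icc 1 (n-2) ∩ ({j, n-1} : Finset ℕ) = {j} := by
          ext x
          simp only [Finset.mem_inter, Finset.mem_insert, Finset.mem_singleton]
          constructor
          · rintro ⟨hx, rfl | rfl⟩
            · rfl
            · exact absurd hx.2 hne1
          · rintro rfl
            exact ⟨Finset.mem_inter.mp hj, Or.inl rfl⟩
        refine ⟨c2 {j, n-1}, ?_, ?_, ?_, ?_⟩
        · intro i _
          rw [c2]
          split <;> omega
        · have hjs : j ∉ ({n-1} : Finset ℕ) := by simp [hjn]
          rw [hξ, sum_c2 n I {j, n-1} hTsub, Finset.sum_insert hjs, Finset.sum_singleton]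
          abel
        · rw [hQI]
          simp only [if_pos h1, if_neg h2, add_zero]
          constructor
          · simp [c2]
          · rw [A_c2, hint, Finset.sum_singleton]
            exact hBo.add_odd hjodd
        · intro c' hb hQ'
          rw [hQI] at hQ'
          simp only [if_pos h1, if_neg h2, add_zero] at hQ'
          have hcn1 : c' (n-1) = 2 := by
            have hb1 := hb (n-1) h1
            have hc2v : c2 {j, n-1} (n-1) = 2 := by simp [c2]
            rw [hc2v] at hb1
            rcases hQ'.1 with ⟨t, ht⟩
            omega
          have hcj : c' j = 2 := by
            by_contra hne2
            have hb2 := hb j hjI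
            have hc2v : c2 {j, n-1} j = 2 := by simp [c2]
            rw [hc2v] at hb2
            have hcj1 : c' j = 1 := by omega
            have hall : ∀ i ∈ I ∩ Finset.Icc 1 (n-2), c' i = 1 := by
              intro i hi
              by_cases hij : i = j
              · rw [hij, hcj1]
              · have hbi := hb i (hIcc i hi).1
                have : c2 {j, n-1} i = 1 := by
                  simp only [c2, Finset.mem_insert, Finset.mem_singleton]
                  rw [if_neg]
                  push_neg
                  exact ⟨hij, (hno_top i hi).1⟩
                rw [this] at hbi
                omega
            rw [hsumone c' hall] at hQ'
            exact (Nat.not_odd_iff_even.mpr hQ'.2) hBo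
          intro i hi
          by_cases hij : i = j
          · subst hij
            simp [c2, hcj]
          · by_cases hin : i = n-1
            · subst hin
              simp [c2, hcn1]
            · have := hb i hi
              have hc2v : c2 {j, n-1} i = 1 := by
                simp only [c2, Finset.mem_insert, Finset.mem_singleton]
                rw [if_neg]
                push_neg
                exact ⟨hij, hin⟩
              rw [hc2v] at this ⊢
              omega
  · -- k = 1, s = n
    have hset : I ∩ ({n-1, n} : Finset ℕ) = {n} := by
      ext x
      simp only [Finset.mem_inter, Finset.mem_insert, Finset.mem_singleton]
      constructor
      · rintro ⟨hx, rfl | rfl⟩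
        · exact absurd hx h1
        · rfl
      · rintro rfl
        exact ⟨h2, Or.inr rfl⟩
    have e0 : epsI n I 0 = 0 := by simp [epsI, hset]
    have e1 : epsI n I 1 = 1 := by simp [epsI, hset]
    have e2 : epsI n I 2 = 0 := by simp [epsI, hset]
    have hnn : (n:ℕ) ∉ Finset.Icc 1 (n-2) := by simp [Finset.mem_Icc]; omega
    simp only [e0, e1, e2, ne_eq, not_true_eq_false, not_false_eq_true, false_implies,
      true_implies, zero_smul, one_smul, add_zero, zero_add, false_or, or_false,
      one_ne_zero, true_or, OfNat.ofNat_ne_zero, exists_const, true_and, and_true,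
      or_self, hset, Finset.mem_singleton]
    constructor
    · rintro ⟨c, hc1, hξ, hQ, hmin⟩
      rw [hQI] at hQ
      simp only [if_neg h1, if_pos h2, zero_add] at hQ
      have hc2n : 2 ≤ c n := by
        rcases hQ.1 with ⟨t, ht⟩
        have := hc1 n h2
        omega
      have hA : Even (∑ i ∈ I ∩ Finset.Icc 1 (n-2), i * c i) :=
        (Nat.even_add.mp hQ.2).mpr hQ.1
      rcases Nat.even_or_odd (∑ i ∈ I ∩ Finset.Icc 1 (n-2), i) with hBe | hBo
      · left
        refine ⟨hBe, n, rfl, ?_⟩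
        have hbounds : ∀ i ∈ I, 1 ≤ c2 {n} i ∧ c2 {n} i ≤ c i := by
          intro i hi
          rw [c2]
          by_cases hin : i ∈ ({n} : Finset ℕ)
          · rw [Finset.mem_singleton] at hin
            subst hin
            simp [hc2n]
          · simp [hin, hc1 i hi]
        have hQ2 : QI n I (c2 {n}) := by
          rw [hQI]
          simp only [if_neg h1, if_pos h2, zero_add]
          have hv : c2 {n} n = 2 := by simp [c2]
          constructor
          · rw [hv]; exact even_two
          · rw [A_c2, hv]
            have : I ∩ Finset.Icc 1 (n-2) ∩ {n} = ∅ := by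
              ext x
              simp only [Finset.mem_inter, Finset.mem_singleton, Finset.notMem_empty,
                iff_false]
              rintro ⟨hx, rfl⟩
              exact hnn hx.2
            rw [this, Finset.sum_empty, add_zero]
            rcases hBe with ⟨t, ht⟩
            exact ⟨t+1, by omega⟩
        have heq := hmin (c2 {n}) hbounds hQ2
        have hcg : ∑ i ∈ I, c i • Hso n i = ∑ i ∈ I, c2 {n} i • Hso n i :=
          Finset.sum_congr rfl (fun i hi => by rw [← heq i hi])
        rw [hξ, hcg, sum_c2 n I {n} (Finset.singleton_subset_iff.mpr h2),
          Finset.sum_singleton]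
      · right
        refine ⟨hBo, ?_⟩
        have hno : ¬ Even ((∑ i ∈ I ∩ Finset.Icc 1 (n-2), i * c i) +
            ∑ i ∈ I ∩ Finset.Icc 1 (n-2), i) := by
          intro h
          exact (Nat.not_odd_iff_even.mpr ((Nat.even_add.mp h).mp hA)) hBo
        obtain ⟨j, hj, hjodd, hjeven⟩ := exists_oddj _ c hno
        have hjI : j ∈ I := (hIcc j hj).1
        have hjn : j ≠ n := (hno_top j hj).2
        have hcj2 : 2 ≤ c j := by
          rcases hjeven with ⟨t, ht⟩
          have := hc1 j hjI
          omega
        have hTsub : ({j, n} : Finset ℕ) ⊆ I := by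
          intro x hx
          rcases Finset.mem_insert.mp hx with rfl | hx
          · exact hjI
          · rw [Finset.mem_singleton] at hx
            subst hx
            exact h2
        have hint : I ∩ Finset.Icc 1 (n-2) ∩ ({j, n} : Finset ℕ) = {j} := by
          ext x
          simp only [Finset.mem_inter, Finset.mem_insert, Finset.mem_singleton]
          constructor
          · rintro ⟨hx, rfl | rfl⟩
            · rfl
            · exact absurd hx.2 hnn
          · rintro rfl
            exact ⟨Finset.mem_inter.mp hj, Or.inl rfl⟩
        have hbounds : ∀ i ∈ I, 1 ≤ c2 {j, n} i ∧ c2 {j, n} i ≤ c i := by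
          intro i hi
          rw [c2]
          by_cases hin : i ∈ ({j, n} : Finset ℕ)
          · rcases Finset.mem_insert.mp hin with rfl | hin'
            · simp [hin, hcj2]
            · rw [Finset.mem_singleton] at hin'
              subst hin'
              simp [hin, hc2n]
          · simp [hin, hc1 i hi]
        have hQ2 : QI n I (c2 {j, n}) := by
          rw [hQI]
          simp only [if_neg h1, if_pos h2, zero_add]
          have hv : c2 {j, n} n = 2 := by simp [c2]
          constructor
          · rw [hv]; exact even_two
          · rw [A_c2, hint, Finset.sum_singleton, hv]
            have : Even (∑ i ∈ I ∩ Finset.Icc 1 (n-2), i + j) := hBo.add_odd hjodd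
            rcases this with ⟨t, ht⟩
            exact ⟨t+1, by omega⟩
        have heq := hmin (c2 {j, n}) hbounds hQ2
        refine ⟨j, n, ⟨hj, hjodd⟩, rfl, ?_⟩
        have hcg : ∑ i ∈ I, c i • Hso n i = ∑ i ∈ I, c2 {j, n} i • Hso n i :=
          Finset.sum_congr rfl (fun i hi => by rw [← heq i hi])
        have hjs : j ∉ ({n} : Finset ℕ) := by simp [hjn]
        rw [hξ, hcg, sum_c2 n I {j, n} hTsub, Finset.sum_insert hjs, Finset.sum_singleton]
        abel
    · rintro (⟨hBe, s, hs, hξ⟩ | ⟨hBo, j, s, ⟨hj, hjodd⟩, hs, hξ⟩) <;> rw [hs] at hξ <;>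
        clear hs
      · refine ⟨c2 {n}, ?_, ?_, ?_, ?_⟩
        · intro i _
          rw [c2]
          split <;> omega
        · rw [hξ, sum_c2 n I {n} (Finset.singleton_subset_iff.mpr h2), Finset.sum_singleton]
        · rw [hQI]
          simp only [if_neg h1, if_pos h2, zero_add]
          have hv : c2 {n} n = 2 := by simp [c2]
          constructor
          · rw [hv]; exact even_two
          · rw [A_c2, hv]
            have : I ∩ Finset.Icc 1 (n-2) ∩ {n} = ∅ := by
              ext x
              simp only [Finset.mem_inter, Finset.mem_singleton, Finset.notMem_empty,
                iff_false]
              rintro ⟨hx, rfl⟩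
              exact hnn hx.2
            rw [this, Finset.sum_empty, add_zero]
            rcases hBe with ⟨t, ht⟩
            exact ⟨t+1, by omega⟩
        · intro c' hb hQ'
          rw [hQI] at hQ'
          simp only [if_neg h1, if_pos h2, zero_add] at hQ'
          have hcn : c' n = 2 := by
            have hb1 := hb n h2
            simp [c2] at hb1
            rcases hQ'.1 with ⟨t, ht⟩
            omega
          intro i hi
          by_cases hin : i = n
          · subst hin
            simp [c2, hcn]
          · have := hb i hi
            simp only [c2, Finset.mem_singleton, if_neg hin] at this ⊢
            omega
      · have hjI : j ∈ I := (hIcc j hj).1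
        have hjn : j ≠ n := (hno_top j hj).2
        have hTsub : ({j, n} : Finset ℕ) ⊆ I := by
          intro x hx
          rcases Finset.mem_insert.mp hx with rfl | hx
          · exact hjI
          · rw [Finset.mem_singleton] at hx
            subst hx
            exact h2
        have hint : I ∩ Finset.Icc 1 (n-2) ∩ ({j, n} : Finset ℕ) = {j} := by
          ext x
          simp only [Finset.mem_inter, Finset.mem_insert, Finset.mem_singleton]
          constructor
          · rintro ⟨hx, rfl | rfl⟩
            · rfl
            · exact absurd hx.2 hnn
          · rintro rfl
            exact ⟨Finset.mem_inter.mp hj, Or.inl rfl⟩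
        refine ⟨c2 {j, n}, ?_, ?_, ?_, ?_⟩
        · intro i _
          rw [c2]
          split <;> omega
        · have hjs : j ∉ ({n} : Finset ℕ) := by simp [hjn]
          rw [hξ, sum_c2 n I {j, n} hTsub, Finset.sum_insert hjs, Finset.sum_singleton]
          abel
        · rw [hQI]
          simp only [if_neg h1, if_pos h2, zero_add]
          have hv : c2 {j, n} n = 2 := by simp [c2]
          constructor
          · rw [hv]; exact even_two
          · rw [A_c2, hint, Finset.sum_singleton, hv]
            have : Even (∑ i ∈ I ∩ Finset.Icc 1 (n-2), i + j) := hBo.add_odd hjodd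
            rcases this with ⟨t, ht⟩
            exact ⟨t+1, by omega⟩
        · intro c' hb hQ'
          rw [hQI] at hQ'
          simp only [if_neg h1, if_pos h2, zero_add] at hQ'
          have hcn : c' n = 2 := by
            have hb1 := hb n h2
            have hv : c2 {j, n} n = 2 := by simp [c2]
            rw [hv] at hb1
            rcases hQ'.1 with ⟨t, ht⟩
            omega
          have hcj : c' j = 2 := by
            by_contra hne2
            have hb2 := hb j hjI
            have hv : c2 {j, n} j = 2 := by simp [c2]
            rw [hv] at hb2
            have hcj1 : c' j = 1 := by omega
            have hall : ∀ i ∈ I ∩ Finset.Icc 1 (n-2), c' i = 1 := by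
              intro i hi
              by_cases hij : i = j
              · rw [hij, hcj1]
              · have hbi := hb i (hIcc i hi).1
                have : c2 {j, n} i = 1 := by
                  simp only [c2, Finset.mem_insert, Finset.mem_singleton]
                  rw [if_neg]
                  push_neg
                  exact ⟨hij, (hno_top i hi).2⟩
                rw [this] at hbi
                omega
            rw [hsumone c' hall, hcn] at hQ'
            have hB2 := hQ'.2
            rcases hB2 with ⟨t, ht⟩
            rw [Nat.odd_iff] at hBo
            omega
          intro i hi
          by_cases hij : i = j
          · subst hij
            simp [c2, hcj]
          · by_cases hin : i = n
            · subst hin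
              simp [c2, hcn]
            · have := hb i hi
              have hv : c2 {j, n} i = 1 := by
                simp only [c2, Finset.mem_insert, Finset.mem_singleton]
                rw [if_neg]
                push_neg
                exact ⟨hij, hin⟩
              rw [hv] at this ⊢
              omega
  · -- k = 0
    have hset : I ∩ ({n-1, n} : Finset ℕ) = ∅ := by
      ext x
      simp only [Finset.mem_inter, Finset.mem_insert, Finset.mem_singleton,
        Finset.notMem_empty, iff_false]
      rintro ⟨hx, rfl | rfl⟩
      · exact h1 hx
      · exact h2 hx
    have e0 : epsI n I 0 = 1 := by simp [epsI, hset]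
    have e1 : epsI n I 1 = 0 := by simp [epsI, hset]
    have e2 : epsI n I 2 = 0 := by simp [epsI, hset]
    simp only [e0, e1, e2, ne_eq, not_true_eq_false, not_false_eq_true, false_implies,
      true_implies, zero_smul, one_smul, add_zero, zero_add, false_or, or_false,
      one_ne_zero, true_or, OfNat.ofNat_ne_zero, exists_const, true_and, and_true,
      or_self]
    constructor
    · rintro ⟨c, hc1, hξ, hQ, hmin⟩
      rw [hQI] at hQ
      simp only [if_neg h1, if_neg h2, add_zero] at hQ
      rcases Nat.even_or_odd (∑ i ∈ I ∩ Finset.Icc 1 (n-2), i) with hBe | hBo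
      · left
        refine ⟨hBe, ?_⟩
        have hQone : QI n I (fun _ => 1) := by
          rw [hQI]
          simp only [if_neg h1, if_neg h2, add_zero]
          refine ⟨Even.zero, ?_⟩
          simpa [hsumone (fun _ => 1) (fun i _ => rfl)] using hBe
        have heq := hmin (fun _ => 1) (fun i hi => ⟨le_refl 1, hc1 i hi⟩) hQone
        have hcg : ∑ i ∈ I, c i • Hso n i = ∑ i ∈ I, (fun _ => 1 : ℕ → ℕ) i • Hso n i :=
          Finset.sum_congr rfl (fun i hi => by rw [← heq i hi])
        rw [hξ, hcg, hone]
      · right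
        refine ⟨hBo, ?_⟩
        have hno : ¬ Even ((∑ i ∈ I ∩ Finset.Icc 1 (n-2), i * c i) +
            ∑ i ∈ I ∩ Finset.Icc 1 (n-2), i) := by
          intro h
          exact (Nat.not_odd_iff_even.mpr ((Nat.even_add.mp h).mp hQ.2)) hBo
        obtain ⟨j, hj, hjodd, hjeven⟩ := exists_oddj _ c hno
        have hjI : j ∈ I := (hIcc j hj).1
        have hcj2 : 2 ≤ c j := by
          rcases hjeven with ⟨t, ht⟩
          have := hc1 j hjI
          omega
        have hbounds : ∀ i ∈ I, 1 ≤ c2 {j} i ∧ c2 {j} i ≤ c i := by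
          intro i hi
          rw [c2]
          by_cases hij : i ∈ ({j} : Finset ℕ)
          · rw [Finset.mem_singleton] at hij
            subst hij
            simp [hcj2]
          · simp [hij, hc1 i hi]
        have hQ2 : QI n I (c2 {j}) := by
          rw [hQI]
          simp only [if_neg h1, if_neg h2, add_zero]
          refine ⟨Even.zero, ?_⟩
          rw [A_c2, Finset.inter_singleton_of_mem hj, Finset.sum_singleton]
          exact hBo.add_odd hjodd
        have heq := hmin (c2 {j}) hbounds hQ2
        refine ⟨j, ⟨hj, hjodd⟩, ?_⟩
        have hcg : ∑ i ∈ I, c i • Hso n i = ∑ i ∈ I, c2 {j} i • Hso n i :=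
          Finset.sum_congr rfl (fun i hi => by rw [← heq i hi])
        rw [hξ, hcg, sum_c2 n I {j} (Finset.singleton_subset_iff.mpr hjI), Finset.sum_singleton]
    · rintro (⟨hBe, hξ⟩ | ⟨hBo, ⟨j, ⟨hj, hjodd⟩, hξ⟩⟩)
      · refine ⟨fun _ => 1, fun i _ => le_refl 1, by rw [hξ, hone], ?_, ?_⟩
        · rw [hQI]
          simp only [if_neg h1, if_neg h2, add_zero]
          refine ⟨Even.zero, ?_⟩
          simpa [hsumone (fun _ => 1) (fun i _ => rfl)] using hBe
        · intro c' hb _ i hi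
          have hthis : 1 ≤ c' i ∧ c' i ≤ 1 := hb i hi
          show c' i = 1
          omega
      · have hjI : j ∈ I := (hIcc j hj).1
        refine ⟨c2 {j}, ?_, ?_, ?_, ?_⟩
        · intro i _
          rw [c2]
          split <;> omega
        · rw [hξ, sum_c2 n I {j} (Finset.singleton_subset_iff.mpr hjI), Finset.sum_singleton]
        · rw [hQI]
          simp only [if_neg h1, if_neg h2, add_zero]
          refine ⟨Even.zero, ?_⟩
          rw [A_c2, Finset.inter_singleton_of_mem hj, Finset.sum_singleton]
          exact hBo.add_odd hjodd
        · intro c' hb hQ'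
          rw [hQI] at hQ'
          simp only [if_neg h1, if_neg h2, add_zero] at hQ'
          have hcj : c' j = 2 := by
            by_contra hne2
            have hb2 := hb j hjI
            simp [c2] at hb2
            have hcj1 : c' j = 1 := by omega
            have hall : ∀ i ∈ I, c' i = 1 := by
              intro i hi
              by_cases hij : i = j
              · rw [hij, hcj1]
              · have := hb i hi
                simp only [c2, Finset.mem_singleton, if_neg hij] at this
                omega
            rw [hsumone c' (fun i hi => hall i (hIcc i hi).1)] at hQ'
            exact (Nat.not_odd_iff_even.mpr hQ'.2) hBo
          intro i hi
          by_cases hij : i = j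
          · subst hij
            simp [c2, hcj]
          · have := hb i hi
            simp only [c2, Finset.mem_singleton, if_neg hij] at this ⊢
            omega
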